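/- The system has a unique minimal solution if and only if the vector (δ_1(1̂), ..., δ_n(1̂)) belongs to S(A,b), where δ_j(1̂) is the minimum of F_j(1̂); in that case this vector is the unique minimal solution. -/

import Mathlib

open Finset

noncomputable section

/-- Łukasiewicz t-norm. -/
def TL (a x : ℝ) : ℝ := max (a + x - 1) 0

/-- Solution set of the addition-Łukasiewicz system. -/
def Sset {m n : ℕ} (A : Fin m → Fin n → ℝ) (b : Fin m → ℝ) : Set (Fin n → ℝ) :=
  {x | (∀ j, x j ∈ Set.Icc (0:ℝ) 1) ∧ ∀ i, b i ≤ ∑ j, TL (A i j) (x j)}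

/-- Minimal solution. -/
def IsMinimalSol {m n : ℕ} (A : Fin m → Fin n → ℝ) (b : Fin m → ℝ) (x : Fin n → ℝ) : Prop :=
  x ∈ Sset A b ∧ ∀ y ∈ Sset A b, y ≤ x → y = x

/-- The set F_j(z). -/
def Fset {m n : ℕ} (A : Fin m → Fin n → ℝ) (b : Fin m → ℝ) (j : Fin n) (z : Fin n → ℝ) :
    Set ℝ :=
  {t | t ∈ Set.Icc (0:ℝ) 1 ∧
    ∀ i, b i ≤ TL (A i j) t + ∑ k ∈ Finset.univ.erase j, TL (A i k) (z k)}

/-- Objective Z(x) = max_j x_j. -/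
def Zf {n : ℕ} (x : Fin n → ℝ) : ℝ := ⨆ j, x j

/-- Optimal solution of the minimax problem. -/
def IsOptimal {m n : ℕ} (A : Fin m → Fin n → ℝ) (b : Fin m → ℝ) (x : Fin n → ℝ) : Prop :=
  x ∈ Sset A b ∧ ∀ y ∈ Sset A b, Zf x ≤ Zf y

/-!
Every solution `x` lies above `δ(1̂)`: raising the other coordinates to `1` only makes the other
terms larger, so `x j ∈ F_j(1̂)`. Hence if `δ(1̂)` is a solution it is the least one. Conversely,
each `1̂` with its `j`-th entry replaced by `δ_j(1̂)` is a solution, and since the solution set is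
compact, a minimal solution lies below it; if the minimal solution is unique, its `j`-th entry is
therefore at most `δ_j(1̂)`, so it equals `δ(1̂)`.
-/

/-- Minimise the coordinate sum over `s ∩ Iic y`. -/
theorem IsCompact.exists_minimal_le {ι : Type*} [Fintype ι] {s : Set (ι → ℝ)}
    (hs : IsCompact s) {y : ι → ℝ} (hy : y ∈ s) : ∃ x ≤ y, Minimal (· ∈ s) x := by
  obtain ⟨x, ⟨hxs, hxy⟩, hmin⟩ := (hs.inter_right isClosed_Iic).exists_isMinOn
    ⟨y, hy, le_refl y⟩ (continuous_finsetSum univ fun i _ => continuous_apply i).continuousOn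
  refine ⟨x, hxy, hxs, fun w hws hwx => ?_⟩
  have hsum : ∑ i, w i = ∑ i, x i :=
    le_antisymm (sum_le_sum fun i _ => hwx i) (hmin ⟨hws, hwx.trans hxy⟩)
  exact fun i => ((sum_eq_sum_iff_of_le fun i _ => hwx i).1 hsum i (mem_univ i)).ge

lemma continuous_TL (a : ℝ) : Continuous (TL a) := by
  unfold TL
  fun_prop

lemma monotone_TL (a : ℝ) : Monotone (TL a) :=
  fun _ _ h => max_le_max (by linarith) le_rfl

section

variable {m n : ℕ} {A : Fin m → Fin n → ℝ} {b : Fin m → ℝ}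

lemma isMinimalSol_iff_minimal {x : Fin n → ℝ} :
    IsMinimalSol A b x ↔ Minimal (· ∈ Sset A b) x := by
  simp only [IsMinimalSol, minimal_iff, eq_comm]

lemma Sset_subset_Icc : Sset A b ⊆ Set.Icc 0 1 :=
  fun _ hx => ⟨fun j => (hx.1 j).1, fun j => (hx.1 j).2⟩

lemma isClosed_Sset : IsClosed (Sset A b) := by
  simp only [Sset, Set.ofPred_and, Set.ofPred_forall]
  refine (isClosed_iInter fun j => isClosed_Icc.preimage (continuous_apply j)).inter
    (isClosed_iInter fun i => isClosed_le continuous_const ?_)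
  exact continuous_finsetSum _ fun j _ => (continuous_TL _).comp (continuous_apply j)

lemma isCompact_Sset : IsCompact (Sset A b) :=
  isCompact_Icc.of_isClosed_subset isClosed_Sset Sset_subset_Icc

lemma isClosed_Fset (j : Fin n) (z : Fin n → ℝ) : IsClosed (Fset A b j z) := by
  simp only [Fset, Set.ofPred_and, Set.ofPred_forall, Set.ofPred_mem_eq]
  exact isClosed_Icc.inter (isClosed_iInter fun i =>
    isClosed_le continuous_const ((continuous_TL _).add continuous_const))

lemma mem_Fset_of_mem_Sset {x z : Fin n → ℝ} (hx : x ∈ Sset A b) (hxz : x ≤ z) (j : Fin n) :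
    x j ∈ Fset A b j z := by
  refine ⟨hx.1 j, fun i => ?_⟩
  calc b i ≤ ∑ k, TL (A i k) (x k) := hx.2 i
    _ = TL (A i j) (x j) + ∑ k ∈ univ.erase j, TL (A i k) (x k) :=
        (add_sum_erase _ _ (mem_univ j)).symm
    _ ≤ TL (A i j) (x j) + ∑ k ∈ univ.erase j, TL (A i k) (z k) :=
        add_le_add_right (sum_le_sum fun k _ => monotone_TL _ (hxz k)) _

lemma update_mem_Sset {z : Fin n → ℝ} (hz : ∀ k, z k ∈ Set.Icc (0 : ℝ) 1) {j : Fin n} {t : ℝ}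
    (ht : t ∈ Fset A b j z) : Function.update z j t ∈ Sset A b := by
  refine ⟨fun k => ?_, fun i => ?_⟩
  · rcases eq_or_ne k j with rfl | hk
    · simpa using ht.1
    · simpa [Function.update_of_ne hk] using hz k
  · rw [← add_sum_erase _ _ (mem_univ j), Function.update_self,
      sum_congr rfl fun k hk => by rw [Function.update_of_ne (ne_of_mem_erase hk)]]
    exact ht.2 i

/-- The vector `(δ_1(z), …, δ_n(z))`. -/
def deltaVec (A : Fin m → Fin n → ℝ) (b : Fin m → ℝ) (z : Fin n → ℝ) : Fin n → ℝ :=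
  fun j => sInf (Fset A b j z)

lemma deltaVec_le {x z : Fin n → ℝ} (hx : x ∈ Sset A b) (hxz : x ≤ z) : deltaVec A b z ≤ x :=
  fun j => csInf_le ⟨0, fun _ ht => ht.1.1⟩ (mem_Fset_of_mem_Sset hx hxz j)

lemma deltaVec_mem_Fset {x z : Fin n → ℝ} (hx : x ∈ Sset A b) (hxz : x ≤ z) (j : Fin n) :
    deltaVec A b z j ∈ Fset A b j z :=
  (isClosed_Fset j z).csInf_mem ⟨_, mem_Fset_of_mem_Sset hx hxz j⟩ ⟨0, fun _ ht => ht.1.1⟩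

lemma isLeast_deltaVec_one (h : deltaVec A b 1 ∈ Sset A b) : IsLeast (Sset A b) (deltaVec A b 1) :=
  ⟨h, fun _ hx => deltaVec_le hx (Sset_subset_Icc hx).2⟩

lemma eq_deltaVec_one_of_unique {x : Fin n → ℝ} (hx : Minimal (· ∈ Sset A b) x)
    (huniq : ∀ y, Minimal (· ∈ Sset A b) y → y = x) : x = deltaVec A b 1 := by
  refine le_antisymm (fun j => ?_) (deltaVec_le hx.prop (Sset_subset_Icc hx.prop).2)
  have hupd : Function.update (1 : Fin n → ℝ) j (deltaVec A b 1 j) ∈ Sset A b :=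
    update_mem_Sset (fun _ => ⟨zero_le_one, le_rfl⟩)
      (deltaVec_mem_Fset hx.prop (Sset_subset_Icc hx.prop).2 j)
  obtain ⟨y, hyle, hy⟩ := isCompact_Sset.exists_minimal_le hupd
  simpa [huniq y hy] using hyle j

end

theorem stmt10_general {m n : ℕ} (A : Fin m → Fin n → ℝ) (b : Fin m → ℝ) :
    ((∃! x, IsMinimalSol A b x) ↔
        (fun j => sInf (Fset A b j (fun _ => (1:ℝ)))) ∈ Sset A b) ∧
      ((fun j => sInf (Fset A b j (fun _ => (1:ℝ)))) ∈ Sset A b →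
        IsMinimalSol A b (fun j => sInf (Fset A b j (fun _ => (1:ℝ)))) ∧
          ∀ y, IsMinimalSol A b y → y = fun j => sInf (Fset A b j (fun _ => (1:ℝ)))) := by
  change ((∃! x, IsMinimalSol A b x) ↔ deltaVec A b 1 ∈ Sset A b) ∧
    (deltaVec A b 1 ∈ Sset A b →
      IsMinimalSol A b (deltaVec A b 1) ∧ ∀ y, IsMinimalSol A b y → y = deltaVec A b 1)
  simp only [isMinimalSol_iff_minimal]
  have hleast (h : deltaVec A b 1 ∈ Sset A b) (y : Fin n → ℝ) :
      Minimal (· ∈ Sset A b) y ↔ y = deltaVec A b 1 :=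
    (isLeast_deltaVec_one h).minimal_iff
  refine ⟨⟨fun ⟨x, hx, huniq⟩ => ?_, fun h => ⟨_, (hleast h _).2 rfl, fun y => (hleast h y).1⟩⟩,
    fun h => ⟨(hleast h _).2 rfl, fun y => (hleast h y).1⟩⟩
  exact eq_deltaVec_one_of_unique hx huniq ▸ hx.prop

theorem stmt10 {m n : ℕ} (A : Fin m → Fin n → ℝ) (b : Fin m → ℝ)
    (hA : ∀ i j, A i j ∈ Set.Icc (0:ℝ) 1) (hb : ∀ i, 0 < b i)
    (hS : (Sset A b).Nonempty) :
    ((∃! x, IsMinimalSol A b x) ↔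
        (fun j => sInf (Fset A b j (fun _ => (1:ℝ)))) ∈ Sset A b) ∧
      ((fun j => sInf (Fset A b j (fun _ => (1:ℝ)))) ∈ Sset A b →
        IsMinimalSol A b (fun j => sInf (Fset A b j (fun _ => (1:ℝ)))) ∧
          ∀ y, IsMinimalSol A b y → y = fun j => sInf (Fset A b j (fun _ => (1:ℝ)))) :=
  stmt10_general A b
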